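/- The group G = A(n,θ) has exactly 2(2^n − 1) conjugacy classes of elements of order 4. -/

import Mathlib

noncomputable section

abbrev Fq (n : ℕ) : Type := GaloisField 2 n

instance (n : ℕ) : Fintype (Fq n) := Fintype.ofFinite _

@[ext] structure SuzukiA (n : ℕ) (θ : Fq n ≃+* Fq n) where
  a : Fq n
  b : Fq n

namespace SuzukiA

variable {n : ℕ} {θ : Fq n ≃+* Fq n}

instance : Mul (SuzukiA n θ) := ⟨fun x y => ⟨x.a + y.a, x.b + y.b + x.a * θ y.a⟩⟩
instance : One (SuzukiA n θ) := ⟨⟨0, 0⟩⟩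
instance : Inv (SuzukiA n θ) := ⟨fun x => ⟨x.a, x.b + x.a * θ x.a⟩⟩

theorem mul_def (x y : SuzukiA n θ) :
    x * y = ⟨x.a + y.a, x.b + y.b + x.a * θ y.a⟩ := rfl

@[simp] theorem one_a : (1 : SuzukiA n θ).a = 0 := rfl
@[simp] theorem one_b : (1 : SuzukiA n θ).b = 0 := rfl

instance : Group (SuzukiA n θ) where
  mul_assoc x y z := by ext <;> simp [mul_def, map_add] <;> ring
  one_mul x := by ext <;> simp [mul_def]
  mul_one x := by ext <;> simp [mul_def]
  inv_mul_cancel x := by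
    have h2 : (2 : Fq n) = 0 := by
      have := CharP.cast_eq_zero (Fq n) 2
      exact_mod_cast this
    show (⟨x.a, x.b + x.a * θ x.a⟩ * x : SuzukiA n θ) = 1
    ext
    · show x.a + x.a = 0
      linear_combination x.a * h2
    · show x.b + x.a * θ x.a + x.b + x.a * θ x.a = 0
      linear_combination (x.b + x.a * θ x.a) * h2

instance : Fintype (SuzukiA n θ) :=
  Fintype.ofEquiv (Fq n × Fq n)
    { toFun := fun p => ⟨p.1, p.2⟩
      invFun := fun x => (x.a, x.b)
      left_inv := fun _ => rfl
      right_inv := fun _ => rfl }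

end SuzukiA

/-!
Conjugating `(a, b)` by `g` gives `(a, b + a' * θ a + a * θ a')` with `a' = g.a`, so the conjugacy
classes with first coordinate `a` are the cosets of the range of the additive map
`c ↦ c * θ a + a * θ c`. Its kernel consists of the `c` with `c / a` fixed by `θ`; since `θ`
generates the Galois group, that fixed field is `𝔽₂`, so the kernel is `{0, a}` and there are
exactly two classes for each `a`. The elements of order `4` are exactly those with `a ≠ 0`, since
`(a, b) ^ 2 = (0, a * θ a)`.
-/

open Function

section PolarForm

variable {K : Type*} [CommRing K]

/-- The polarization of the quadratic map `a ↦ a * θ a`; in `SuzukiA` it is the `b`-coordinate of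
commutators. -/
def polarForm (θ : K ≃+* K) (a : K) : K →+ K where
  toFun c := c * θ a + a * θ c
  map_zero' := by simp
  map_add' c d := by simp only [map_add]; ring

@[simp] lemma polarForm_apply (θ : K ≃+* K) (a c : K) : polarForm θ a c = c * θ a + a * θ c := rfl

end PolarForm

section CharTwo

variable {K : Type*} [Field K] [CharP K 2]

lemma eq_zero_or_eq_one_of_generator_fixes [Finite K] {θ : K ≃+* K}
    (hθ : ∀ σ : K ≃+* K, σ ∈ Subgroup.zpowers θ) {c : K} (hc : θ c = c) : c = 0 ∨ c = 1 := by
  have hstab : Subgroup.zpowers θ ≤ MulAction.stabilizer (RingAut K) c :=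
    Subgroup.zpowers_le.mpr hc
  have hfrob : c ^ 2 = c := hstab (hθ (frobeniusEquiv K 2))
  exact IsIdempotentElem.iff_eq_zero_or_one.mp (by rwa [IsIdempotentElem, ← sq])

lemma polarForm_eq_zero_iff {θ : K ≃+* K} (hfix : ∀ c, θ c = c → c = 0 ∨ c = 1)
    {a : K} (ha : a ≠ 0) (c : K) : polarForm θ a c = 0 ↔ c = 0 ∨ c = a := by
  have hθa : θ a ≠ 0 := (map_ne_zero θ).mpr ha
  calc polarForm θ a c = 0 ↔ θ (c / a) = c / a := by
        rw [polarForm_apply, CharTwo.add_eq_zero, map_div₀, div_eq_div_iff hθa ha]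
        constructor <;> intro h <;> linear_combination -h
    _ ↔ c / a = 0 ∨ c / a = 1 :=
        ⟨hfix _, by rintro (h | h) <;> simp [h]⟩
    _ ↔ c = 0 ∨ c = a := by rw [div_eq_zero_iff, div_eq_one_iff_eq ha]; simp [ha]

lemma card_polarForm_ker {θ : K ≃+* K} (hfix : ∀ c, θ c = c → c = 0 ∨ c = 1)
    {a : K} (ha : a ≠ 0) : Nat.card (polarForm θ a).ker = 2 := by
  have hker : ((polarForm θ a).ker : Set K) = {0, a} := by
    ext c
    simp only [SetLike.mem_coe, AddMonoidHom.mem_ker, polarForm_eq_zero_iff hfix ha,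
      Set.mem_insert_iff, Set.mem_singleton_iff]
  rw [← SetLike.coe_sort_coe, hker, Nat.card_coe_set_eq, Set.ncard_pair ha.symm]

lemma card_quotient_polarForm_range [Finite K] {θ : K ≃+* K}
    (hfix : ∀ c, θ c = c → c = 0 ∨ c = 1) {a : K} (ha : a ≠ 0) :
    Nat.card (K ⧸ (polarForm θ a).range) = 2 := by
  rw [← AddSubgroup.index, AddSubgroup.index_range, card_polarForm_ker hfix ha]

end CharTwo

lemma ConjClasses.exists_mem_carrier_orderOf_eq_iff {G : Type*} [Group G] (x : G) (k : ℕ) :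
    (∃ y ∈ (ConjClasses.mk x).carrier, orderOf y = k) ↔ orderOf x = k := by
  simp only [ConjClasses.mem_carrier_iff_mk_eq, ConjClasses.mk_eq_mk_iff_isConj]
  constructor
  · rintro ⟨y, ⟨c, hc⟩, rfl⟩
    exact hc.orderOf_eq.symm
  · intro hx
    exact ⟨x, IsConj.refl x, hx⟩

namespace SuzukiA

variable {n : ℕ} {θ : Fq n ≃+* Fq n}

lemma inv_def (x : SuzukiA n θ) : x⁻¹ = ⟨x.a, x.b + x.a * θ x.a⟩ := rfl

lemma conj_eq (g x : SuzukiA n θ) : g * x * g⁻¹ = ⟨x.a, x.b + polarForm θ x.a g.a⟩ := by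
  ext
  · simp only [mul_def, inv_def]
    linear_combination g.a * CharTwo.two_eq_zero (R := Fq n)
  · simp only [mul_def, inv_def, polarForm_apply]
    linear_combination (g.b + g.a * θ g.a) * CharTwo.two_eq_zero (R := Fq n)

lemma isConj_iff_polarForm (x y : SuzukiA n θ) :
    IsConj x y ↔ x.a = y.a ∧ y.b - x.b ∈ (polarForm θ x.a).range := by
  simp only [_root_.isConj_iff, conj_eq, AddMonoidHom.mem_range, eq_sub_iff_add_eq']
  constructor
  · rintro ⟨g, rfl⟩
    exact ⟨rfl, g.a, rfl⟩
  · rintro ⟨ha, c, hb⟩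
    exact ⟨⟨c, 0⟩, SuzukiA.ext ha hb⟩

lemma sq_eq (x : SuzukiA n θ) : x ^ 2 = ⟨0, x.a * θ x.a⟩ := by
  ext <;> simp only [sq, mul_def, CharTwo.add_self_eq_zero, zero_add]

lemma sq_eq_one_iff (x : SuzukiA n θ) : x ^ 2 = 1 ↔ x.a = 0 := by
  simp [sq_eq, SuzukiA.ext_iff]

lemma orderOf_eq_four_iff (x : SuzukiA n θ) : orderOf x = 4 ↔ x.a ≠ 0 := by
  have hfour : x ^ 2 ^ (1 + 1) = 1 := by
    rw [pow_succ, pow_one, pow_mul, sq_eq_one_iff, sq_eq]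
  constructor
  · intro h ha
    have : orderOf x ∣ 2 := orderOf_dvd_of_pow_eq_one ((sq_eq_one_iff x).mpr ha)
    rw [h] at this
    norm_num at this
  · intro ha
    exact orderOf_eq_prime_pow (by rwa [pow_one, sq_eq_one_iff]) hfour

def conjInvariant (x : SuzukiA n θ) : Σ a : Fq n, Fq n ⧸ (polarForm θ a).range := ⟨x.a, x.b⟩

lemma conjInvariant_eq_iff (x y : SuzukiA n θ) :
    conjInvariant x = conjInvariant y ↔ IsConj x y := by
  obtain ⟨a, b⟩ := x
  obtain ⟨a', b'⟩ := y
  rw [isConj_iff_polarForm, conjInvariant, conjInvariant, Sigma.mk.inj_iff]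
  constructor <;> rintro ⟨rfl, h⟩ <;> refine ⟨rfl, ?_⟩ <;>
    simpa only [heq_eq_eq, QuotientAddGroup.eq, neg_add_eq_sub] using h

lemma conjInvariant_surjective : Surjective (conjInvariant (θ := θ)) := by
  rintro ⟨a, q⟩
  obtain ⟨b, rfl⟩ := QuotientAddGroup.mk_surjective q
  exact ⟨⟨a, b⟩, rfl⟩

def conjClassesEquiv : ConjClasses (SuzukiA n θ) ≃ Σ a : Fq n, Fq n ⧸ (polarForm θ a).range :=
  (Quotient.congrRight fun x y => (conjInvariant_eq_iff x y).symm).trans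
    (Setoid.quotientKerEquivOfSurjective _ conjInvariant_surjective)

lemma conjClassesEquiv_mk (x : SuzukiA n θ) :
    conjClassesEquiv (ConjClasses.mk x) = conjInvariant x := rfl

lemma card_conjClasses_orderOf_eq_four (hfix : ∀ c : Fq n, θ c = c → c = 0 ∨ c = 1) :
    Nat.card {c : ConjClasses (SuzukiA n θ) | ∃ x ∈ c.carrier, orderOf x = 4} =
      2 * (Nat.card (Fq n) - 1) := by
  classical
  have hmem (c : ConjClasses (SuzukiA n θ)) :
      (∃ x ∈ c.carrier, orderOf x = 4) ↔ (conjClassesEquiv c).1 ≠ 0 := by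
    obtain ⟨x, rfl⟩ := ConjClasses.mk_surjective c
    rw [ConjClasses.exists_mem_carrier_orderOf_eq_iff, orderOf_eq_four_iff, conjClassesEquiv_mk]
    rfl
  calc _ = Nat.card (Σ a : {a : Fq n // a ≠ 0}, Fq n ⧸ (polarForm θ a.1).range) :=
        Nat.card_congr ((conjClassesEquiv.subtypeEquiv hmem).trans
          (Equiv.subtypeSigmaEquiv _ _))
    _ = ∑ _a : {a : Fq n // a ≠ 0}, 2 := by
        rw [Nat.card_sigma]
        exact Finset.sum_congr rfl fun a _ => card_quotient_polarForm_range hfix a.2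
    _ = 2 * (Nat.card (Fq n) - 1) := by
        simp [Fintype.card_subtype_compl, mul_comm]

end SuzukiA

open SuzukiA in
theorem stmt12_general (n : ℕ) (hn : 1 < n) (θ : Fq n ≃+* Fq n)
    (hθ : ∀ σ : Fq n ≃+* Fq n, σ ∈ Subgroup.zpowers θ) :
    Nat.card {c : ConjClasses (SuzukiA n θ) | ∃ x ∈ c.carrier, orderOf x = 4} =
      2 * (2 ^ n - 1) := by
  rw [card_conjClasses_orderOf_eq_four fun c => eq_zero_or_eq_one_of_generator_fixes hθ,
    GaloisField.card 2 n (by omega)]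

open SuzukiA in
theorem stmt12 (n : ℕ) (hn : 1 < n) (hodd : Odd n) (θ : Fq n ≃+* Fq n)
    (hθ : ∀ σ : Fq n ≃+* Fq n, σ ∈ Subgroup.zpowers θ) :
    Nat.card {c : ConjClasses (SuzukiA n θ) | ∃ x ∈ c.carrier, orderOf x = 4} =
      2 * (2 ^ n - 1) :=
  stmt12_general n hn θ hθ
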